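/- Every infinite, finitely generated, virtually nilpotent group Γ has infinite FC-centre, i.e., the set of elements of Γ with finite conjugacy class is infinite. -/

import Mathlib

set_option maxHeartbeats 1000000
set_option synthInstance.maxHeartbeats 400000
noncomputable section

open scoped ENNReal

/-- ℓ²(Γ), the Hilbert space of square-summable complex functions on `G`. -/
abbrev l2 (G : Type*) := lp (fun _ : G => ℂ) 2

namespace GroupCstar

lemma two_toReal_pos : 0 < (2 : ℝ≥0∞).toReal := by norm_num

/-- The linear isometry of ℓ² spaces induced by a bijection of index sets,
`f ↦ f ∘ e.symm`. -/
def lpShift {α β : Type*} (e : α ≃ β) : l2 α ≃ₗᵢ[ℂ] l2 β where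
  toFun f := ⟨fun b => f (e.symm b), by
    show Memℓp _ 2
    rw [memℓp_gen_iff two_toReal_pos]
    exact e.symm.summable_iff.2 ((lp.memℓp f).summable two_toReal_pos)⟩
  invFun f := ⟨fun a => f (e a), by
    show Memℓp _ 2
    rw [memℓp_gen_iff two_toReal_pos]
    exact e.summable_iff.2 ((lp.memℓp f).summable two_toReal_pos)⟩
  map_add' f g := rfl
  map_smul' c f := rfl
  left_inv f := by ext a; simp
  right_inv f := by ext b; simp
  norm_map' f := by
    rw [lp.norm_eq_tsum_rpow two_toReal_pos, lp.norm_eq_tsum_rpow two_toReal_pos]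
    congr 1
    exact Equiv.tsum_eq e.symm fun b => ‖f b‖ ^ (2 : ℝ≥0∞).toReal

@[simp] lemma lpShift_apply {α β : Type*} (e : α ≃ β) (f : l2 α) (b : β) :
    (lpShift e f : ∀ _ : β, ℂ) b = f (e.symm b) := rfl

variable (G : Type*) [Group G]

/-- The algebra `B(ℓ²(G))` of bounded operators on `ℓ²(G)`. -/
abbrev B := l2 G →L[ℂ] l2 G

variable {G}

/-- The left regular representation of a group element, as a bounded (unitary) operator on
ℓ²(G): `(leftReg g f) x = f (g⁻¹ * x)`. -/
def leftReg (g : G) : B G :=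
  (lpShift (Equiv.mulLeft g)).toLinearIsometry.toContinuousLinearMap

@[simp] lemma leftReg_apply (g : G) (f : l2 G) (x : G) :
    (leftReg g f : ∀ _ : G, ℂ) x = f (g⁻¹ * x) := rfl

variable (G)

/-- The left regular representation as a monoid homomorphism into bounded operators. -/
def leftRegMonoidHom : G →* B G where
  toFun := leftReg
  map_one' := by ext f x; simp
  map_mul' g h := by ext f x; simp [mul_assoc]

/-- The left regular representation `λ` of the complex group algebra `ℂ[G]` on `ℓ²(G)`,
extending `g ↦ leftReg g` linearly. -/
def lam : MonoidAlgebra ℂ G →ₐ[ℂ] B G :=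
  (MonoidAlgebra.lift ℂ (B G) G) (leftRegMonoidHom G)

/-- δ_e, the canonical trace vector in ℓ²(G). -/
def deltaOne : l2 G :=
  letI := Classical.decEq G
  lp.single 2 (1 : G) (1 : ℂ)

variable {G}

/-- The canonical trace `τ(x) = ⟨x δ_e, δ_e⟩` on `B(ℓ²(G))` (in particular on the group
von Neumann algebra).  Note: with the mathematician's convention (linear in the first
variable) `⟨x δ_e, δ_e⟩` is `inner δ_e (x δ_e)` in Mathlib's convention. -/
def tau (x : B G) : ℂ := inner (𝕜 := ℂ) (deltaOne G) (x (deltaOne G))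

/-- The commutant of a set of bounded operators. -/
def commutant (S : Set (B G)) : Set (B G) := {x | ∀ s ∈ S, s * x = x * s}

variable (G)

/-- The group von Neumann algebra `LG`, realized as the double commutant of `λ(ℂ[G])`
inside `B(ℓ²(G))`. -/
def vN : Set (B G) := commutant (commutant (Set.range (lam G)))

/-- The center `Z(LG)` of the group von Neumann algebra. -/
def vNCenter : Set (B G) := {x | x ∈ vN G ∧ ∀ y ∈ vN G, x * y = y * x}

variable {G}

/-- An orthogonal projection: a self-adjoint idempotent. -/
def IsProjection (p : B G) : Prop := IsSelfAdjoint p ∧ p * p = p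

variable (G)

/-- The central granularity `σ(G)`: the infimum of the traces of the nonzero orthogonal
projections in the center of the group von Neumann algebra. -/
def centralGranularity : ℝ :=
  sInf ((fun p => (tau p).re) '' {p : B G | p ∈ vNCenter G ∧ IsProjection p ∧ p ≠ 0})

/-- The set of orders of finite subgroups of `G`. -/
def finSubgroupOrders : Set ℕ := {n | ∃ H : Subgroup G, Finite H ∧ Nat.card H = n}

open scoped Classical in
/-- The torsion multiplier `θ(G) = 1 / lcm {|H| : H ≤ G finite}`, with the convention
that the lcm of an unbounded set is `∞` and `1/∞ = 0`. -/
def torsionMultiplier : ℝ :=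
  if h : (finSubgroupOrders G).Finite then ((h.toFinset.lcm id : ℕ) : ℝ)⁻¹ else 0

/-- The additive subgroup of `ℝ` generated by the reciprocals of the orders of the finite
subgroups of `G`. -/
def atiyahGroup : AddSubgroup ℝ :=
  AddSubgroup.closure {x : ℝ | ∃ H : Subgroup G, Finite H ∧ x = ((Nat.card H : ℝ))⁻¹}

/-- The operator `L_A` on `ℓ²(G)ⁿ` associated to a matrix `A ∈ Mₙ(ℂ[G])`, given by applying
`λ` entrywise and letting the resulting matrix of operators act. -/
def LA {n : ℕ} (A : Matrix (Fin n) (Fin n) (MonoidAlgebra ℂ G)) :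
    PiLp 2 (fun _ : Fin n => l2 G) →L[ℂ] PiLp 2 (fun _ : Fin n => l2 G) :=
  letI e := PiLp.continuousLinearEquiv 2 ℂ (fun _ : Fin n => l2 G)
  ((e.symm : (∀ _ : Fin n, l2 G) →L[ℂ] PiLp 2 (fun _ : Fin n => l2 G)).comp
      (ContinuousLinearMap.pi fun i =>
        ∑ j, (lam G (A i j)).comp (ContinuousLinearMap.proj j))).comp
    (e : PiLp 2 (fun _ : Fin n => l2 G) →L[ℂ] (∀ _ : Fin n, l2 G))

/-- The vector `δ_e eᵢ` in `ℓ²(G)ⁿ`. -/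
def stdv {n : ℕ} (i : Fin n) : PiLp 2 (fun _ : Fin n => l2 G) :=
  (WithLp.equiv 2 (∀ _ : Fin n, l2 G)).symm (Pi.single i (deltaOne G))

/-- The von Neumann dimension `dim_{LG} ker L_A = Σᵢ ⟨P (δ_e eᵢ), δ_e eᵢ⟩`, where `P` is the
orthogonal projection onto the kernel of `L_A`. -/
def kerDim {n : ℕ} (A : Matrix (Fin n) (Fin n) (MonoidAlgebra ℂ G)) : ℝ :=
  haveI : CompleteSpace (PiLp 2 (fun _ : Fin n => l2 G)) := inferInstance
  haveI : Submodule.HasOrthogonalProjection (LinearMap.ker (LA G A).toLinearMap) :=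
    Submodule.HasOrthogonalProjection.ofCompleteSpace _
  ∑ i, (inner (𝕜 := ℂ)
    ((Submodule.orthogonalProjectionOnto (LinearMap.ker (LA G A).toLinearMap) (stdv G i) :
        PiLp 2 (fun _ : Fin n => l2 G)))
    (stdv G i)).re

/-- `G` satisfies the strong Atiyah conjecture: all von Neumann kernel dimensions of matrices
over `ℂ[G]` lie in the additive subgroup generated by the reciprocals of the orders of finite
subgroups. -/
def SatisfiesStrongAtiyah : Prop :=
  ∀ n : ℕ, 1 ≤ n → ∀ A : Matrix (Fin n) (Fin n) (MonoidAlgebra ℂ G), kerDim G A ∈ atiyahGroup G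

variable {G}

/-- The canonical involution on the complex group algebra: `star (Σ cg·g) = Σ conj(cg)·g⁻¹`. -/
def gaStar (a : MonoidAlgebra ℂ G) : MonoidAlgebra ℂ G :=
  MonoidAlgebra.ofCoeff
    (Finsupp.mapDomain (fun g : G => g⁻¹) (Finsupp.mapRange (starRingEnd ℂ) (map_zero _) a.coeff))

/-- `N` is a C*-norm on the group algebra `ℂ[G]`: a genuine algebra norm satisfying the
C*-identity `N(a* a) = N(a)²`. -/
def IsCstarNorm (N : MonoidAlgebra ℂ G → ℝ) : Prop :=
  (∀ a, 0 ≤ N a) ∧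
  (∀ a, N a = 0 ↔ a = 0) ∧
  (∀ a b, N (a + b) ≤ N a + N b) ∧
  (∀ (c : ℂ) (a), N (c • a) = ‖c‖ * N a) ∧
  (∀ a b, N (a * b) ≤ N a * N b) ∧
  (∀ a, N (gaStar a * a) = N a ^ 2)

variable (G)

/-- `ℂ[G]` is C*_r-unique: no C*-norm on `ℂ[G]` is properly majorized by the reduced norm
`a ↦ ‖λ(a)‖`. -/
def IsCstarRedUnique : Prop :=
  ¬ ∃ N : MonoidAlgebra ℂ G → ℝ, IsCstarNorm N ∧
      (∀ a, N a ≤ ‖lam G a‖) ∧ (∃ a, N a < ‖lam G a‖)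

variable {G}

/-- The conjugacy class of an element. -/
def conjClass (g : G) : Set G := {x | IsConj g x}

variable (G)

/-- The FC-centre: the set of elements with finite conjugacy class. -/
def fcCentre : Set G := {g : G | (conjClass g).Finite}

end GroupCstar

open GroupCstar

/-! A finite-index subgroup `H` of `Γ` is again infinite, and an element of `H` whose
centralizer in `H` has finite index has a finite-index centralizer in `Γ`, i.e. a finite
conjugacy class there. So it suffices to show that an infinite nilpotent group `G` has infinite
FC-centre, by induction on the nilpotency class. If the centre `Z` is infinite we are done.
Otherwise `G ⧸ Z` is infinite of smaller class, and an element of `G` whose image has a finite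
conjugacy class has one as well, since the fibres of `G → G ⧸ Z` are finite. -/

namespace Subgroup

variable {G : Type*} [Group G]

lemma infinite_of_finiteIndex [Infinite G] (H : Subgroup G) [H.FiniteIndex] : Infinite H :=
  not_finite_iff_infinite.mp fun h =>
    not_finite_iff_infinite.mpr ‹_› ((finite_iff_finite_and_finiteIndex H).mpr ⟨h, ‹_›⟩)

lemma infinite_quotient_of_finite [Infinite G] (N : Subgroup G) [Finite N] : Infinite (G ⧸ N) :=
  index_eq_zero_iff_infinite.mp <| not_finiteIndex_iff.mp fun h =>
    not_finite_iff_infinite.mpr ‹_› ((finite_iff_finite_and_finiteIndex N).mpr ⟨‹_›, h⟩)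

end Subgroup

namespace GroupCstar

open MulAction Subgroup

variable {G : Type*} [Group G]

lemma conjClass_eq_orbit (g : G) : conjClass g = orbit (ConjAct G) g := by
  ext x
  exact isConj_comm.trans ConjAct.mem_orbit_conjAct.symm

lemma conjClass_finite_iff_finiteIndex_centralizer (g : G) :
    (conjClass g).Finite ↔ (centralizer {g}).FiniteIndex := by
  have hindex : (centralizer {g}).index = (conjClass g).ncard := by
    rw [conjClass_eq_orbit, ← index_stabilizer, centralizer_eq_comap_stabilizer]
    exact index_comap_of_surjective _ ConjAct.toConjAct.surjective
  rw [finiteIndex_iff, hindex]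
  exact ⟨fun h => Set.ncard_ne_zero_of_mem (IsConj.refl g) h, Set.finite_of_ncard_ne_zero⟩

lemma center_subset_fcCentre : (center G : Set G) ⊆ fcCentre G := fun g hg => by
  rw [fcCentre, Set.mem_ofPred_eq, conjClass_finite_iff_finiteIndex_centralizer,
    centralizer_eq_top_iff_subset.mpr (Set.singleton_subset_iff.mpr hg)]
  infer_instance

lemma finite_preimage_mk {N : Subgroup G} [Finite N] {s : Set (G ⧸ N)} (hs : s.Finite) :
    ((↑) ⁻¹' s : Set G).Finite := by
  refine hs.preimage' fun q _ => ?_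
  obtain ⟨x, rfl⟩ := QuotientGroup.mk_surjective q
  refine (Set.finite_range fun n : N => x * n).subset fun y hy => ?_
  exact ⟨⟨x⁻¹ * y, QuotientGroup.eq.mp (Set.mem_singleton_iff.mp hy).symm⟩,
    mul_inv_cancel_left x y⟩

lemma preimage_fcCentre_subset (N : Subgroup G) [N.Normal] [Finite N] :
    (↑) ⁻¹' fcCentre (G ⧸ N) ⊆ fcCentre G := fun _ hg =>
  (finite_preimage_mk hg).subset fun _ hx => (QuotientGroup.mk' N).map_isConj hx

lemma fcCentre_infinite_of_isNilpotent (G : Type*) [Group G] [Group.IsNilpotent G]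
    [Infinite G] : (fcCentre G).Infinite := by
  refine Group.nilpotent_center_quotient_ind
    (P := fun G _ _ => Infinite G → (fcCentre G).Infinite) G ?_ ?_ ‹_›
  · intro G _ _ _
    exact (not_finite G).elim
  · intro G _ _ ih _
    by_cases hZ : (center G : Set G).Infinite
    · exact hZ.mono center_subset_fcCentre
    have : Finite (center G) := Set.not_infinite.mp hZ
    have hQ := ih (infinite_quotient_of_finite (center G))
    exact (hQ.preimage fun q _ => QuotientGroup.mk_surjective q).mono (preimage_fcCentre_subset _)

lemma coe_mem_fcCentre_of_finiteIndex {H : Subgroup G} [H.FiniteIndex] {h : H}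
    (hh : h ∈ fcCentre H) : (h : G) ∈ fcCentre G := by
  rw [fcCentre, Set.mem_ofPred_eq, conjClass_finite_iff_finiteIndex_centralizer] at hh ⊢
  have hle : (centralizer {h}).map H.subtype ≤ centralizer {(h : G)} := by
    rintro - ⟨k, hk, rfl⟩
    exact mem_centralizer_singleton_iff.mpr
      (congrArg Subtype.val (mem_centralizer_singleton_iff.mp hk))
  have : ((centralizer {h}).map H.subtype).FiniteIndex :=
    ⟨by rw [index_map_subtype]; exact mul_ne_zero hh.index_ne_zero FiniteIndex.index_ne_zero⟩
  exact finiteIndex_of_le hle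

end GroupCstar

theorem fcCentre_infinite_of_infinite_fg_virtually_nilpotent_general
    (Γ : Type*) [Group Γ] [Infinite Γ]
    (hvn : ∃ H : Subgroup Γ, H.FiniteIndex ∧ Group.IsNilpotent ↥H) :
    (fcCentre Γ).Infinite := by
  obtain ⟨H, hH, hnil⟩ := hvn
  have := H.infinite_of_finiteIndex
  exact ((fcCentre_infinite_of_isNilpotent H).image Subtype.val_injective.injOn).mono
    (Set.image_subset_iff.mpr fun _ => coe_mem_fcCentre_of_finiteIndex)

/-- Every infinite, finitely generated, virtually nilpotent group has
infinite FC-centre. -/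
theorem fcCentre_infinite_of_infinite_fg_virtually_nilpotent
    (Γ : Type*) [Group Γ] [Infinite Γ] (hfg : Group.FG Γ)
    (hvn : ∃ H : Subgroup Γ, H.FiniteIndex ∧ Group.IsNilpotent ↥H) :
    (fcCentre Γ).Infinite :=
  fcCentre_infinite_of_infinite_fg_virtually_nilpotent_general Γ hvn
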